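/- Let G be a finite group, π a ℤG-module, and (X,A) a pair of free G-simplicial sets with A ⊆ X. If H^{n+1}_G(X,A;π) = 0, then for every equivariant simplicial map c: A → E(π,n) and every equivariant simplicial map z: X → K(π,n+1) with δ∘c = z|_A, there exists an equivariant simplicial map ℓ: X → E(π,n) with ℓ|_A = c and δ∘ℓ = z. -/

import Mathlib

open CategoryTheory Simplicial Opposite Topology

noncomputable section

/-- A `G`-simplicial set: a simplicial set together with a simplicial action of `G`. -/
structure GSSet (G : Type) [Group G] : Type 1 where
  X : SSet.{0}
  act : G →* CategoryTheory.End X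

namespace GSSet

variable {G : Type} [Group G]

/-- The action of `g : G` on a `G`-simplicial set, as a simplicial map. -/
def a (P : GSSet G) (g : G) : P.X ⟶ P.X := P.act g

/-- The action is free on simplices in every dimension. -/
def Free (P : GSSet G) : Prop :=
  ∀ (g : G) (m : SimplexCategoryᵒᵖ) (x : P.X.obj m), (P.a g).app m x = x → g = 1

/-- Equivariance of a simplicial map between `G`-simplicial sets. -/
def IsEqv (P Q : GSSet G) (f : P.X ⟶ Q.X) : Prop :=
  ∀ g : G, P.a g ≫ f = f ≫ Q.a g

/-- A simplex of a simplicial set is degenerate if it is in the image of a degeneracy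
operator. -/
def _root_.SSet.Degen (X : SSet) {n : ℕ} (x : X _⦋n + 1⦌) : Prop :=
  ∃ (i : Fin (n + 1)) (y : X _⦋n⦌), X.σ i y = x

/-- `dim P ≤ k` : every simplex of dimension `> k` is degenerate. -/
def DimLE (P : GSSet G) (k : ℕ) : Prop :=
  ∀ n : ℕ, k ≤ n → ∀ x : P.X _⦋n + 1⦌, SSet.Degen P.X x

/-- A finite simplicial set: finitely many simplices in each dimension, and finitely many
nondegenerate simplices overall (i.e. finite-dimensional). -/
def FiniteSSet (P : GSSet G) : Prop :=
  (∀ m : SimplexCategoryᵒᵖ, Finite (P.X.obj m)) ∧ ∃ k, P.DimLE k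

/-- A simplicial subset of a `G`-simplicial set, closed under the `G`-action. -/
structure GSub (P : GSSet G) : Type where
  mem : ∀ m : SimplexCategoryᵒᵖ, Set (P.X.obj m)
  map_mem : ∀ {m m' : SimplexCategoryᵒᵖ} (f : m ⟶ m') (x : P.X.obj m),
    x ∈ mem m → P.X.map f x ∈ mem m'
  act_mem : ∀ (g : G) (m : SimplexCategoryᵒᵖ) (x : P.X.obj m),
    x ∈ mem m → (P.a g).app m x ∈ mem m

namespace GSub

variable {P : GSSet G} (A : GSub P)

/-- The underlying simplicial set of a simplicial subset. -/
def toSSet : SSet where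
  obj m := {x : P.X.obj m // x ∈ A.mem m}
  map f := ↾(fun x => ⟨P.X.map f x.1, A.map_mem f x.1 x.2⟩)
  map_id m := by
    ext x : 3
    apply Subtype.ext
    simp
  map_comp f g := by
    ext x : 3
    apply Subtype.ext
    simp

/-- The inclusion of a simplicial subset. -/
def ι : A.toSSet ⟶ P.X where
  app m := ↾(fun x => x.1)
  naturality _ _ _ := rfl

/-- The simplicial subset as a `G`-simplicial set. -/
def toGSSet : GSSet G where
  X := A.toSSet
  act :=
    { toFun := fun g =>
        { app := fun m => ↾(fun x => ⟨(P.a g).app m x.1, A.act_mem g m x.1 x.2⟩)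
          naturality := fun m m' f => by
            ext x : 3
            apply Subtype.ext
            exact NatTrans.naturality_apply (P.a g) f x.1 }
      map_one' := by
        refine SSet.hom_ext fun m => ?_
        ext x : 3
        apply Subtype.ext
        show (P.a 1).app m x.1 = x.1
        have h1 : P.a (1 : G) = 𝟙 P.X := P.act.map_one
        rw [h1]
        rfl
      map_mul' := fun g h => by
        refine SSet.hom_ext fun m => ?_
        ext x : 3
        apply Subtype.ext
        show (P.a (g * h)).app m x.1 = _
        have h1 : P.a (g * h) = P.a h ≫ P.a g := P.act.map_mul g h
        rw [h1]
        rfl }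

end GSub

end GSSet
-- TOP chunk: geometric realization, equivariant continuous maps, homotopy groups
namespace GSSet

variable {G : Type} [Group G]

/-- The geometric realization of (the underlying simplicial set of) a `G`-simplicial set. -/
abbrev T (P : GSSet G) : Type := SSet.toTop.obj P.X

/-- The continuous map induced on geometric realizations by a simplicial map. -/
def tmap {P Q : GSSet G} (f : P.X ⟶ Q.X) : C(P.T, Q.T) := (SSet.toTop.map f).hom

/-- The action of `g` on the geometric realization. -/
def ta (P : GSSet G) (g : G) : C(P.T, P.T) := tmap (P.a g)

/-- An equivariant continuous map between realizations of `G`-simplicial sets. -/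
structure EqvCMap (P Q : GSSet G) : Type where
  f : C(P.T, Q.T)
  eqv : ∀ (g : G) (x : P.T), f (P.ta g x) = Q.ta g (f x)

/-- Equivariant homotopy between equivariant continuous maps: a homotopy which is
equivariant at each time. -/
def EqvCHomotopic {P Q : GSSet G} (f₀ f₁ : EqvCMap P Q) : Prop :=
  ∃ H : ContinuousMap.Homotopy f₀.f f₁.f,
    ∀ (t : unitInterval) (g : G) (x : P.T), H (t, P.ta g x) = Q.ta g (H (t, x))

/-- The set of equivariant homotopy classes of equivariant continuous maps `|X| → |Y|`. -/
def EqvHtpyClasses (P Q : GSSet G) : Type := Quot (@EqvCHomotopic G _ P Q)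

/-- The identity as an equivariant map. -/
def EqvCMap.id (P : GSSet G) : EqvCMap P P := ⟨ContinuousMap.id _, fun _ _ => rfl⟩

/-- Composition of equivariant maps. -/
def EqvCMap.comp {P Q R : GSSet G} (F : EqvCMap Q R) (F' : EqvCMap P Q) : EqvCMap P R :=
  ⟨F.f.comp F'.f, fun g x => by
    simp only [ContinuousMap.comp_apply, F'.eqv g x, F.eqv g]⟩

/-- The realization of an equivariant simplicial map, as an equivariant continuous map. -/
def realize {P Q : GSSet G} (f : P.X ⟶ Q.X) (hf : IsEqv P Q f) : EqvCMap P Q :=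
  ⟨tmap f, fun g x => by
    have h := congrArg (fun u => SSet.toTop.map u) (hf g)
    simp only [Functor.map_comp] at h
    have := congrArg (fun (u : SSet.toTop.obj P.X ⟶ SSet.toTop.obj Q.X) => u x) h
    simpa [tmap, ta] using this⟩

/-- A simplicial map is a weak homotopy equivalence if its geometric realization is a
`G`-homotopy equivalence. -/
def IsGHtpyEq {P Q : GSSet G} (f : P.X ⟶ Q.X) : Prop :=
  ∃ hf : IsEqv P Q f, ∃ K : EqvCMap Q P,
    EqvCHomotopic (K.comp (realize f hf)) (EqvCMap.id P) ∧
    EqvCHomotopic ((realize f hf).comp K) (EqvCMap.id Q)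

end GSSet

/-- A `d`-connected topological space: nonempty, path-connected, and all homotopy groups
`π_i` vanish for `i ≤ d`. -/
def DConnSpace (Z : Type) [TopologicalSpace Z] (d : ℕ) : Prop :=
  Nonempty Z ∧ PathConnectedSpace Z ∧
    ∀ (z : Z) (i : ℕ), i ≤ d → Subsingleton (HomotopyGroup (Fin i) Z z)

/-- A `G`-simplicial set is `1`-connected if its realization is. -/
def GSSet.OneConn {G : Type} [Group G] (P : GSSet G) : Prop := DConnSpace P.T 1

open Topology.Homotopy in
/-- The induced map on homotopy groups of a continuous map. -/
def piPush {X Y : Type} [TopologicalSpace X] [TopologicalSpace Y] (f : C(X, Y)) (n : ℕ)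
    (x : X) : HomotopyGroup (Fin n) X x → HomotopyGroup (Fin n) Y (f x) :=
  Quotient.map
    (fun p => ⟨f.comp p.1, fun y hy => by
      simp only [ContinuousMap.comp_apply]
      rw [p.2 y hy]⟩)
    (fun p q h => by
      obtain ⟨H⟩ := h
      exact ⟨H.compContinuousMap f⟩)

/-- A continuous map is `m`-connected (in the sense that the pair given by its mapping
cylinder is `m`-connected): it is bijective on `π_j` for `j < m` and surjective on `π_m`,
for all basepoints. -/
def ConnMap {X Y : Type} [TopologicalSpace X] [TopologicalSpace Y] (f : C(X, Y)) (m : ℕ) :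
    Prop :=
  ∀ x : X, (∀ j : ℕ, j ≤ m → Function.Surjective (piPush f j x)) ∧
    ∀ j : ℕ, j < m → Function.Injective (piPush f j x)

/-- The fibre of (the realization of) a map over a point `b`, with the subspace topology,
is `d`-connected. -/
def GSSet.FibreConnAt {G : Type} [Group G] {Y B : GSSet G} (φ : Y.X ⟶ B.X)
    (b : B.T) (d : ℕ) : Prop :=
  DConnSpace {y : Y.T // GSSet.tmap φ y = b} d
-- SIMP chunk: products, simplicial homotopies, lifting-extension problems
open SSet

/-- Binary product of simplicial sets, defined levelwise. -/
def SdProd (X Y : SSet) : SSet where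
  obj m := X.obj m × Y.obj m
  map f := ↾(fun p => (X.map f p.1, Y.map f p.2))
  map_id m := by ext p <;> simp
  map_comp f g := by ext p <;> simp

/-- Product of simplicial maps. -/
def sdMap {X X' Y Y' : SSet} (f : X ⟶ X') (g : Y ⟶ Y') : SdProd X Y ⟶ SdProd X' Y' where
  app m := ↾(fun p => (f.app m p.1, g.app m p.2))
  naturality m m' u := by
    ext p : 3
    change (f.app m' (X.map u p.1), g.app m' (Y.map u p.2)) =
      (X'.map u (f.app m p.1), Y'.map u (g.app m p.2))
    rw [FunctorToTypes.naturality, FunctorToTypes.naturality]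

/-- First projection. -/
def sdFst (X Y : SSet) : SdProd X Y ⟶ X where
  app m := ↾(fun p => p.1)
  naturality _ _ _ := rfl

/-- Second projection. -/
def sdSnd (X Y : SSet) : SdProd X Y ⟶ Y where
  app m := ↾(fun p => p.2)
  naturality _ _ _ := rfl

lemma sdMap_id (X Y : SSet) : sdMap (𝟙 X) (𝟙 Y) = 𝟙 (SdProd X Y) := rfl

lemma sdMap_comp {X X' X'' Y Y' Y'' : SSet} (f : X ⟶ X') (f' : X' ⟶ X'')
    (g : Y ⟶ Y') (g' : Y' ⟶ Y'') :
    sdMap (f ≫ f') (g ≫ g') = sdMap f g ≫ sdMap f' g' := rfl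

lemma std_const_map {n : ℕ} (k : Fin (n + 1)) {m m' : SimplexCategoryᵒᵖ} (u : m ⟶ m') :
    Δ[n].map u (SSet.stdSimplex.const n k m) = SSet.stdSimplex.const n k m' := rfl

/-- The inclusion of `X` at the vertex `k` of `Δ[1] × X`. -/
def vtx (k : Fin 2) (X : SSet) : X ⟶ SdProd Δ[1] X where
  app m := ↾(fun x => (SSet.stdSimplex.const 1 k m, x))
  naturality m m' u := by
    ext x : 3
    change (SSet.stdSimplex.const 1 k m', X.map u x) =
      (Δ[1].map u (SSet.stdSimplex.const 1 k m), X.map u x)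
    rw [std_const_map]

/-- A Kan fibration: right lifting property against all horn inclusions. -/
def IsKanFib {Y B : SSet} (φ : Y ⟶ B) : Prop :=
  ∀ (n : ℕ) (i : Fin (n + 1)) (u : (Λ[n, i] : SSet) ⟶ Y) (v : Δ[n] ⟶ B),
    u ≫ φ = Λ[n, i].ι ≫ v →
      ∃ w : Δ[n] ⟶ Y, Λ[n, i].ι ≫ w = u ∧ w ≫ φ = v

namespace GSSet

variable {G : Type} [Group G]

/-- A simplicial set with trivial `G`-action. -/
def triv (G : Type) [Group G] (X : SSet) : GSSet G where
  X := X
  act :=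
    { toFun := fun _ => 𝟙 X
      map_one' := rfl
      map_mul' := fun _ _ => (Category.comp_id _).symm }

/-- Product of `G`-simplicial sets with the diagonal action. -/
def prod (P Q : GSSet G) : GSSet G where
  X := SdProd P.X Q.X
  act :=
    { toFun := fun g => sdMap (P.a g) (Q.a g)
      map_one' := by
        show sdMap (P.a 1) (Q.a 1) = 𝟙 _
        have h1 : P.a (1 : G) = 𝟙 P.X := P.act.map_one
        have h2 : Q.a (1 : G) = 𝟙 Q.X := Q.act.map_one
        rw [h1, h2, sdMap_id]
      map_mul' := fun g h => by
        show sdMap (P.a (g * h)) (Q.a (g * h)) = _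
        have h1 : P.a (g * h) = P.a h ≫ P.a g := P.act.map_mul g h
        have h2 : Q.a (g * h) = Q.a h ≫ Q.a g := Q.act.map_mul g h
        rw [h1, h2, sdMap_comp]
        rfl }

/-- The data of an (equivariant) lifting-extension problem:
a commutative square `A → Y`, `A ↪ X → B`, `Y → B` of `G`-simplicial sets. -/
structure LEP (G : Type) [Group G] : Type 1 where
  A : GSSet G
  X : GSSet G
  Y : GSSet G
  B : GSSet G
  ι : A.X ⟶ X.X
  f : A.X ⟶ Y.X
  g : X.X ⟶ B.X
  φ : Y.X ⟶ B.X

namespace LEP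

variable (S : LEP G)

/-- The commutativity, equivariance, monomorphism and freeness conditions on a
lifting-extension problem. -/
def IsValid : Prop :=
  S.ι ≫ S.g = S.f ≫ S.φ ∧ (∀ m, Function.Injective (S.ι.app m)) ∧
    IsEqv S.A S.X S.ι ∧ IsEqv S.A S.Y S.f ∧ IsEqv S.X S.B S.g ∧ IsEqv S.Y S.B S.φ

/-- A diagonal of the lifting-extension problem: an equivariant map `ℓ : X → Y` with
`ℓ ∘ ι = f` and `φ ∘ ℓ = g`. -/
def Diag : Type :=
  {ℓ : S.X.X ⟶ S.Y.X // IsEqv S.X S.Y ℓ ∧ S.ι ≫ ℓ = S.f ∧ ℓ ≫ S.φ = S.g}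

/-- Two diagonals are homotopic if they are joined by an equivariant fibrewise simplicial
homotopy `Δ¹ × X → Y` which is constant on `A` (with value prescribed by `f`). -/
def DiagHomotopic (ℓ₀ ℓ₁ : S.Diag) : Prop :=
  ∃ h : SdProd Δ[1] S.X.X ⟶ S.Y.X,
    (∀ g : G, sdMap (𝟙 Δ[1]) (S.X.a g) ≫ h = h ≫ S.Y.a g) ∧
    vtx 0 S.X.X ≫ h = ℓ₀.1 ∧
    vtx 1 S.X.X ≫ h = ℓ₁.1 ∧
    h ≫ S.φ = sdSnd Δ[1] S.X.X ≫ S.g ∧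
    sdMap (𝟙 Δ[1]) S.ι ≫ h = sdSnd Δ[1] S.A.X ≫ S.f

/-- The set `[X,Y]^A_B` of diagonals up to equivariant fibrewise homotopy relative to `A`. -/
def DiagClasses : Type := Quot S.DiagHomotopic

end LEP

end GSSet
-- KE chunk: Eilenberg–MacLane simplicial sets K(π,n), E(π,n) and pullbacks
namespace GSSet

variable {G : Type} [Group G]

/-- Pointwise form of equivariance. -/
lemma eqv_app {P Q : GSSet G} {f : P.X ⟶ Q.X} (hf : IsEqv P Q f) (g : G)
    (m : SimplexCategoryᵒᵖ) (x : P.X.obj m) :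
    f.app m ((P.a g).app m x) = (Q.a g).app m (f.app m x) := by
  have h := types_congr_hom (congrArg (fun η : P.X ⟶ Q.X => η.app m) (hf g)) x
  simpa using h

/-- The simplicial set of (all) `π`-valued `q`-cochains: an `m`-simplex is a function from
the `q`-simplices of `Δ[m]` to `π`. -/
def CochSet (π : Type) [AddCommGroup π] (q : ℕ) : SSet where
  obj m := (SimplexCategory.mk q ⟶ m.unop) → π
  map f := ↾(fun c => fun x => c (x ≫ f.unop))
  map_id m := by ext c x; simp
  map_comp f g := by ext c x; simp

/-- The `G`-action on cochains induced by a `ℤG`-module structure on `π`. -/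
def CochGS (G : Type) [Group G] (π : Type) [AddCommGroup π] [DistribMulAction G π]
    (q : ℕ) : GSSet G where
  X := CochSet π q
  act :=
    { toFun := fun g =>
        { app := fun m => ↾(fun c => fun x => g • c x)
          naturality := fun _ _ _ => rfl }
      map_one' := by
        refine SSet.hom_ext fun m => ?_
        ext c : 3
        show (fun x => (1 : G) • c x) = c
        funext x
        exact one_smul G (c x)
      map_mul' := fun g h => by
        refine SSet.hom_ext fun m => ?_
        ext c : 3
        show (fun x => (g * h) • c x) = (fun x => g • h • c x)
        funext x
        exact mul_smul g h (c x) }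

/-- The simplicial coboundary, as a map of cochain simplicial sets. -/
def cobS (π : Type) [AddCommGroup π] (q : ℕ) : CochSet π q ⟶ CochSet π (q + 1) where
  app m := ↾(fun c => fun y => ∑ i : Fin (q + 2), ((-1 : ℤ) ^ (i : ℕ)) • c (SimplexCategory.δ i ≫ y))
  naturality m m' u := by
    ext c : 3
    funext y
    show ∑ i : Fin (q + 2), ((-1 : ℤ) ^ (i : ℕ)) • c ((SimplexCategory.δ i ≫ y) ≫ u.unop) =
      ∑ i : Fin (q + 2), ((-1 : ℤ) ^ (i : ℕ)) • c (SimplexCategory.δ i ≫ y ≫ u.unop)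
    exact Finset.sum_congr rfl fun i _ => by rw [Category.assoc]

/-- `E(π,q)`: the simplicial subset of normalized cochains (functions vanishing on
degenerate, i.e. non-injective, simplices), as a `G`-simplicial subset. -/
def ESub (G : Type) [Group G] (π : Type) [AddCommGroup π] [DistribMulAction G π] (q : ℕ) :
    GSub (CochGS G π q) where
  mem m := {c | ∀ x : SimplexCategory.mk q ⟶ m.unop,
    ¬ Function.Injective x.toOrderHom → c x = 0}
  map_mem {m m'} f c hc := by
    intro x hx
    show c (x ≫ f.unop) = 0
    refine hc _ (fun hinj => hx ?_)
    intro a b hab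
    refine hinj (show (x ≫ f.unop).toOrderHom a = (x ≫ f.unop).toOrderHom b from ?_)
    change f.unop.toOrderHom (x.toOrderHom a) = f.unop.toOrderHom (x.toOrderHom b)
    rw [hab]
  act_mem g m c hc := by
    intro x hx
    show g • c x = 0
    rw [hc x hx, smul_zero]

/-- `K(π,q)`: the simplicial subset of normalized cocycles, as a `G`-simplicial subset. -/
def KSub (G : Type) [Group G] (π : Type) [AddCommGroup π] [DistribMulAction G π] (q : ℕ) :
    GSub (CochGS G π q) where
  mem m := {c | (∀ x : SimplexCategory.mk q ⟶ m.unop,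
      ¬ Function.Injective x.toOrderHom → c x = 0) ∧
    ∀ y : SimplexCategory.mk (q + 1) ⟶ m.unop,
      ∑ i : Fin (q + 2), ((-1 : ℤ) ^ (i : ℕ)) • c (SimplexCategory.δ i ≫ y) = 0}
  map_mem {m m'} f c hc := by
    constructor
    · intro x hx
      show c (x ≫ f.unop) = 0
      refine hc.1 _ (fun hinj => hx ?_)
      intro a b hab
      refine hinj (show (x ≫ f.unop).toOrderHom a = (x ≫ f.unop).toOrderHom b from ?_)
      change f.unop.toOrderHom (x.toOrderHom a) = f.unop.toOrderHom (x.toOrderHom b)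
      rw [hab]
    · intro y
      show ∑ i : Fin (q + 2), ((-1 : ℤ) ^ (i : ℕ)) • c ((SimplexCategory.δ i ≫ y) ≫ f.unop) = 0
      calc ∑ i : Fin (q + 2), ((-1 : ℤ) ^ (i : ℕ)) • c ((SimplexCategory.δ i ≫ y) ≫ f.unop)
          = ∑ i : Fin (q + 2), ((-1 : ℤ) ^ (i : ℕ)) • c (SimplexCategory.δ i ≫ y ≫ f.unop) :=
            Finset.sum_congr rfl fun i _ => by rw [Category.assoc]
        _ = 0 := hc.2 (y ≫ f.unop)
  act_mem g m c hc := by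
    constructor
    · intro x hx
      show g • c x = 0
      rw [hc.1 x hx, smul_zero]
    · intro y
      show ∑ i : Fin (q + 2), ((-1 : ℤ) ^ (i : ℕ)) • (g • c (SimplexCategory.δ i ≫ y)) = 0
      calc ∑ i : Fin (q + 2), ((-1 : ℤ) ^ (i : ℕ)) • (g • c (SimplexCategory.δ i ≫ y))
          = ∑ i : Fin (q + 2), g • (((-1 : ℤ) ^ (i : ℕ)) • c (SimplexCategory.δ i ≫ y)) :=
            Finset.sum_congr rfl fun i _ =>
              ((DistribMulAction.toAddMonoidHom π g).map_zsmul _ _).symm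
        _ = g • ∑ i : Fin (q + 2), ((-1 : ℤ) ^ (i : ℕ)) • c (SimplexCategory.δ i ≫ y) :=
            (map_sum (DistribMulAction.toAddMonoidHom π g) _ _).symm
        _ = 0 := by rw [hc.2 y, smul_zero]

/-- `E(π,q)` as a `G`-simplicial set. -/
def EG (G : Type) [Group G] (π : Type) [AddCommGroup π] [DistribMulAction G π] (q : ℕ) :
    GSSet G := (ESub G π q).toGSSet

/-- `K(π,q)` as a `G`-simplicial set. -/
def KG (G : Type) [Group G] (π : Type) [AddCommGroup π] [DistribMulAction G π] (q : ℕ) :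
    GSSet G := (KSub G π q).toGSSet

/-- The coboundary fibration `δ : E(π,q) → K(π,q+1)`, expressed with values in the ambient
simplicial set of all cochains. -/
def deltaE (G : Type) [Group G] (π : Type) [AddCommGroup π] [DistribMulAction G π]
    (q : ℕ) : (EG G π q).X ⟶ CochSet π (q + 1) :=
  (ESub G π q).ι ≫ cobS π q

/-- The inclusion `K(π,q) ⊆ (all cochains)`. -/
def kinc (G : Type) [Group G] (π : Type) [AddCommGroup π] [DistribMulAction G π]
    (q : ℕ) : (KG G π q).X ⟶ CochSet π q :=
  (KSub G π q).ι

/-- The pullback of the fibration `δ : E(π,q) → K(π,q+1)` along a map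
`k : Q → K(π,q+1) ⊆ Coch(π,q+1)`, as a `G`-simplicial subset of `Q × E(π,q)`. -/
def PBSub (Q : GSSet G) (π : Type) [AddCommGroup π] [DistribMulAction G π] (q : ℕ)
    (k : Q.X ⟶ CochSet π (q + 1)) (hk : IsEqv Q (CochGS G π (q + 1)) k) :
    GSub (Q.prod (EG G π q)) where
  mem m := {p | k.app m p.1 = (cobS π q).app m p.2.1}
  map_mem {m m'} f p hp := by
    show k.app m' (Q.X.map f p.1) = (cobS π q).app m' ((CochSet π q).map f p.2.1)
    have h1 := NatTrans.naturality_apply k f p.1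
    have h2 := NatTrans.naturality_apply (cobS π q) f p.2.1
    rw [h1, h2, hp]
  act_mem g m p hp := by
    show k.app m ((Q.a g).app m p.1) = (cobS π q).app m (fun x => g • p.2.1 x)
    refine (eqv_app hk g m p.1).trans ?_
    show (fun y => g • (k.app m p.1) y) = _
    funext y
    show g • (k.app m p.1) y = ∑ i : Fin (q + 2), ((-1 : ℤ) ^ (i : ℕ)) •
      (g • p.2.1 (SimplexCategory.δ i ≫ y))
    rw [hp]
    show g • ∑ i : Fin (q + 2), ((-1 : ℤ) ^ (i : ℕ)) • p.2.1 (SimplexCategory.δ i ≫ y) = _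
    calc g • ∑ i : Fin (q + 2), ((-1 : ℤ) ^ (i : ℕ)) • p.2.1 (SimplexCategory.δ i ≫ y)
        = ∑ i : Fin (q + 2), g • (((-1 : ℤ) ^ (i : ℕ)) • p.2.1 (SimplexCategory.δ i ≫ y)) :=
          map_sum (DistribMulAction.toAddMonoidHom π g) _ _
      _ = ∑ i : Fin (q + 2), ((-1 : ℤ) ^ (i : ℕ)) • (g • p.2.1 (SimplexCategory.δ i ≫ y)) :=
          Finset.sum_congr rfl fun i _ =>
            (DistribMulAction.toAddMonoidHom π g).map_zsmul _ _

/-- The pullback `Q ×_{K(π,q+1)} E(π,q)` as a `G`-simplicial set. -/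
def PBG (Q : GSSet G) (π : Type) [AddCommGroup π] [DistribMulAction G π] (q : ℕ)
    (k : Q.X ⟶ CochSet π (q + 1)) (hk : IsEqv Q (CochGS G π (q + 1)) k) : GSSet G :=
  (PBSub Q π q k hk).toGSSet

/-- First projection of the pullback. -/
def pbFst (Q : GSSet G) (π : Type) [AddCommGroup π] [DistribMulAction G π] (q : ℕ)
    (k : Q.X ⟶ CochSet π (q + 1)) (hk : IsEqv Q (CochGS G π (q + 1)) k) :
    (PBG Q π q k hk).X ⟶ Q.X :=
  (PBSub Q π q k hk).ι ≫ sdFst _ _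

/-- Second projection of the pullback, to `E(π,q)`. -/
def pbSnd (Q : GSSet G) (π : Type) [AddCommGroup π] [DistribMulAction G π] (q : ℕ)
    (k : Q.X ⟶ CochSet π (q + 1)) (hk : IsEqv Q (CochGS G π (q + 1)) k) :
    (PBG Q π q k hk).X ⟶ (EG G π q).X :=
  (PBSub Q π q k hk).ι ≫ sdSnd _ _

end GSSet
-- COH chunk: equivariant relative simplicial cochains and cohomology
namespace GSSet

variable {G : Type} [Group G]

/-- The simplicial coboundary operator on `π`-valued cochains of a simplicial set. -/
def cob (P : GSSet G) (π : Type) [AddCommGroup π] (n : ℕ) :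
    ((P.X _⦋n⦌) → π) →+ ((P.X _⦋n + 1⦌) → π) :=
  AddMonoidHom.mk'
    (fun c x => ∑ i : Fin (n + 2), ((-1 : ℤ) ^ (i : ℕ)) • c (P.X.δ i x))
    (by
      intro a b
      funext x
      simp [smul_add, Finset.sum_add_distrib])

/-- The subgroup of cochains that are equivariant and vanish on `A`. -/
def eqvRelCochain (P : GSSet G) (A : GSub P) (π : Type) [AddCommGroup π]
    [DistribMulAction G π] (n : ℕ) : AddSubgroup ((P.X _⦋n⦌) → π) where
  carrier := {c | (∀ (g : G) (x : P.X _⦋n⦌),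
      c ((P.a g).app (Opposite.op (SimplexCategory.mk n)) x) = g • c x) ∧
    ∀ x : P.X _⦋n⦌, x ∈ A.mem (Opposite.op (SimplexCategory.mk n)) → c x = 0}
  add_mem' := by
    rintro a b ⟨ha1, ha2⟩ ⟨hb1, hb2⟩
    exact ⟨fun g x => by simp [ha1 g x, hb1 g x, smul_add],
      fun x hx => by simp [ha2 x hx, hb2 x hx]⟩
  zero_mem' := ⟨fun g x => by simp, fun x hx => rfl⟩
  neg_mem' := by
    rintro a ⟨h1, h2⟩
    exact ⟨fun g x => by simp [h1 g x], fun x hx => by simp [h2 x hx]⟩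

/-- Equivariant relative cocycles. -/
def relCocycles (P : GSSet G) (A : GSub P) (π : Type) [AddCommGroup π]
    [DistribMulAction G π] (n : ℕ) : AddSubgroup ((P.X _⦋n⦌) → π) :=
  eqvRelCochain P A π n ⊓ (cob P π n).ker

/-- Equivariant relative coboundaries. -/
def relCoboundaries (P : GSSet G) (A : GSub P) (π : Type) [AddCommGroup π]
    [DistribMulAction G π] : (n : ℕ) → AddSubgroup ((P.X _⦋n⦌) → π) := fun n => match n with
  | 0 => ⊥
  | (n + 1) => AddSubgroup.map (cob P π n) (eqvRelCochain P A π n)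

/-- The equivariant relative cohomology group `H^n_G(X, A; π)` (cocycles modulo
coboundaries). -/
def HG (P : GSSet G) (A : GSub P) (π : Type) [AddCommGroup π] [DistribMulAction G π]
    (n : ℕ) : Type :=
  relCocycles P A π n ⧸ (relCoboundaries P A π n).addSubgroupOf (relCocycles P A π n)

instance (P : GSSet G) (A : GSub P) (π : Type) [AddCommGroup π] [DistribMulAction G π]
    (n : ℕ) : AddCommGroup (HG P A π n) :=
  QuotientAddGroup.Quotient.addCommGroup _

end GSSet

/-!
Extend the cochain of `c` by zero to an equivariant normalized `n`-cochain `γ` on `X` and let `ζ`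
be the `(n+1)`-cocycle of `z`. Then `ζ - δγ` is an equivariant cocycle vanishing on `A`, so the
vanishing of `H^{n+1}_G(X,A;π)` gives an equivariant cochain `v`, zero on `A`, with `δv = ζ - δγ`,
and `γ + v` would be the cochain of the required lift. But `H_G` is computed from all cochains,
whereas maps to `E(π,n)` are normalized cochains, so `v` has to be normalized first: precompose it
with the Dold–Kan projection `P∞` of the relative chains `ℤ[X]/ℤ[A]`. Being a natural chain map
that kills degenerate chains and is the identity modulo them, `P∞` turns `v` into an equivariant
normalized cochain, still zero on `A`, with the same coboundary.
-/

open scoped DoldKan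

namespace AlgebraicTopology.DoldKan

variable {C : Type*} [Category* C] [Preadditive C] {Y : SimplicialObject C} {T : C}

lemma PInfty_f_comp_of_degeneraciesVanish {n : ℕ} {f : Y _⦋n⦌ ⟶ T}
    (hf : DegeneraciesVanish f) : PInfty.f n ≫ f = f := by
  have h := PInfty_f_add_QInfty_f (X := Y) n =≫ f
  rwa [Preadditive.add_comp, (degeneraciesVanish_iff_QInfty_f_comp f).1 hf, add_zero,
    Category.id_comp] at h

lemma DegeneraciesVanish.d_comp {n : ℕ} {f : Y _⦋n⦌ ⟶ T} (hf : DegeneraciesVanish f) :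
    DegeneraciesVanish (K[Y].d (n + 1) n ≫ f) := by
  rw [degeneraciesVanish_iff_QInfty_f_comp, ← Category.assoc, QInfty.comm, Category.assoc,
    (degeneraciesVanish_iff_QInfty_f_comp f).1 hf, Limits.comp_zero]

end AlgebraicTopology.DoldKan

namespace GSSet

open AlgebraicTopology AlgebraicTopology.DoldKan

variable {G : Type} [Group G] {X : GSSet G}

section Cochains

variable (X) (π : Type) [AddCommGroup π]

def normalizedCochains (n : ℕ) : AddSubgroup (X.X _⦋n⦌ → π) where
  carrier := {c | ∀ ⦃Δ : SimplexCategory⦄ (θ : ⦋n⦌ ⟶ Δ), ¬Function.Injective θ.toOrderHom →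
    ∀ x, c (X.X.map θ.op x) = 0}
  add_mem' ha hb _ θ hθ x := by simp [ha θ hθ x, hb θ hθ x]
  zero_mem' _ _ _ _ := rfl
  neg_mem' ha _ θ hθ x := by simp [ha θ hθ x]

def eqvCochains [DistribMulAction G π] (n : ℕ) : AddSubgroup (X.X _⦋n⦌ → π) where
  carrier := {c | ∀ g x, c ((X.a g).app _ x) = g • c x}
  add_mem' ha hb g x := by simp [ha g x, hb g x]
  zero_mem' _ _ := by simp
  neg_mem' ha g x := by simp [ha g x]

variable {X π}

lemma not_injective_σ {k : ℕ} (i : Fin (k + 1)) :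
    ¬Function.Injective (SimplexCategory.σ i).toOrderHom := fun h => by
  have := SimplexCategory.mono_iff_injective.2 h
  have := SimplexCategory.len_le_of_mono (SimplexCategory.σ i)
  simp at this

lemma apply_σ_eq_zero {k : ℕ} {c : X.X _⦋k + 1⦌ → π} (hc : c ∈ normalizedCochains X π (k + 1))
    (i : Fin (k + 1)) (y : X.X _⦋k⦌) : c (X.X.σ i y) = 0 :=
  hc _ (not_injective_σ i) y

lemma mem_normalizedCochains_of_σ {k : ℕ} {c : X.X _⦋k + 1⦌ → π}
    (hc : ∀ i y, c (X.X.σ i y) = 0) : c ∈ normalizedCochains X π (k + 1) := by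
  intro Δ θ hθ x
  obtain ⟨i, θ', rfl⟩ := SimplexCategory.eq_σ_comp_of_not_injective θ hθ
  rw [op_comp, Functor.map_comp_apply]
  exact hc i _

lemma mem_normalizedCochains_zero (c : X.X _⦋0⦌ → π) : c ∈ normalizedCochains X π 0 :=
  fun _ _ hθ => absurd (fun a b _ => Subsingleton.elim (α := Fin 1) a b) hθ

lemma cob_mem_eqvCochains [DistribMulAction G π] {k : ℕ} {c : X.X _⦋k⦌ → π}
    (hc : c ∈ eqvCochains X π k) : cob X π k c ∈ eqvCochains X π (k + 1) := by
  intro g x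
  simp only [cob, AddMonoidHom.mk'_apply, Finset.smul_sum]
  refine Finset.sum_congr rfl fun i _ => ?_
  rw [smul_comm, ← hc g]
  congr 2
  exact (NatTrans.naturality_apply (X.a g) (SimplexCategory.δ i).op x).symm

end Cochains

instance : Bot (GSub X) where
  bot :=
    { mem := fun _ => ∅
      map_mem := fun _ _ h => h.elim
      act_mem := fun _ _ _ h => h.elim }

section RelativeChains

variable (A : GSub X)

abbrev RelChains (m : SimplexCategoryᵒᵖ) : Type :=
  (X.X.obj m →₀ ℤ) ⧸ Submodule.span ℤ ((fun x => Finsupp.single x (1 : ℤ)) '' A.mem m)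

variable {A} in
def relChain {m : SimplexCategoryᵒᵖ} (x : X.X.obj m) : RelChains A m :=
  Submodule.Quotient.mk (Finsupp.single x 1)

lemma relChain_eq_zero {m : SimplexCategoryᵒᵖ} {x : X.X.obj m} (hx : x ∈ A.mem m) :
    relChain (A := A) x = 0 :=
  (Submodule.Quotient.mk_eq_zero _).2 (Submodule.subset_span ⟨x, hx, rfl⟩)

lemma RelChains.linearMap_ext {m : SimplexCategoryᵒᵖ} {N : Type*} [AddCommGroup N] [Module ℤ N]
    {f f' : RelChains A m →ₗ[ℤ] N} (h : ∀ x, f (relChain x) = f' (relChain x)) : f = f' :=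
  Submodule.linearMap_qext _ (Finsupp.lhom_ext' fun x => LinearMap.ext_ring (h x))

def relChainMap {m m' : SimplexCategoryᵒᵖ} (f : X.X.obj m → X.X.obj m')
    (hf : ∀ x ∈ A.mem m, f x ∈ A.mem m') : RelChains A m →ₗ[ℤ] RelChains A m' :=
  Submodule.mapQ _ _ (Finsupp.lmapDomain ℤ ℤ f) (by
    rw [Submodule.span_le, Set.image_subset_iff]
    intro x hx
    simp only [Set.mem_preimage, SetLike.mem_coe, Submodule.mem_comap, Finsupp.lmapDomain_apply,
      Finsupp.mapDomain_single]
    exact Submodule.subset_span ⟨f x, hf x hx, rfl⟩)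

@[simp]
lemma relChainMap_relChain {m m' : SimplexCategoryᵒᵖ} (f : X.X.obj m → X.X.obj m')
    (hf : ∀ x ∈ A.mem m, f x ∈ A.mem m') (x : X.X.obj m) :
    relChainMap A f hf (relChain x) = relChain (f x) := by
  simp [relChainMap, relChain]

/-- Reducible, so that elements of `(relSimplicialChains A).obj m` are seen to be elements of
`RelChains A m`. -/
abbrev relSimplicialChains : SimplicialObject (ModuleCat ℤ) where
  obj m := ModuleCat.of ℤ (RelChains A m)
  map f := ModuleCat.ofHom (relChainMap A (X.X.map f) (A.map_mem f))
  map_id m := by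
    ext : 1
    exact RelChains.linearMap_ext A fun x => by simp
  map_comp f f' := by
    ext : 1
    exact RelChains.linearMap_ext A fun x => by simp

lemma relSimplicialChains_map_relChain {m m' : SimplexCategoryᵒᵖ} (f : m ⟶ m') (x : X.X.obj m) :
    ((relSimplicialChains A).map f).hom (relChain x) = relChain (X.X.map f x) :=
  relChainMap_relChain A _ (A.map_mem f) x

variable {A} in
lemma relSimplicialChains.hom_ext {m : SimplexCategoryᵒᵖ} {M : ModuleCat ℤ}
    {f f' : (relSimplicialChains A).obj m ⟶ M}
    (h : ∀ x, f.hom (relChain x) = f'.hom (relChain x)) : f = f' :=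
  ModuleCat.hom_ext (RelChains.linearMap_ext A h)

def relSimplicialChainsAct (g : G) : relSimplicialChains A ⟶ relSimplicialChains A where
  app m := ModuleCat.ofHom (relChainMap A ((X.a g).app m) (A.act_mem g m))
  naturality m m' f := relSimplicialChains.hom_ext fun x => by
    simp [NatTrans.naturality_apply (X.a g) f x]

lemma relSimplicialChainsAct_relChain (g : G) {m : SimplexCategoryᵒᵖ} (x : X.X.obj m) :
    ((relSimplicialChainsAct A g).app m).hom (relChain x) = relChain ((X.a g).app m x) :=
  relChainMap_relChain A _ (A.act_mem g m) x

variable {π : Type} [AddCommGroup π]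

def cochainLift {m : SimplexCategoryᵒᵖ} (c : X.X.obj m → π) (hc : ∀ x ∈ A.mem m, c x = 0) :
    (relSimplicialChains A).obj m ⟶ ModuleCat.of ℤ π :=
  ModuleCat.ofHom (Submodule.liftQ _ (Finsupp.linearCombination ℤ c) (by
    rw [Submodule.span_le, Set.image_subset_iff]
    intro x hx
    simpa using hc x hx))

lemma cochainLift_relChain {m : SimplexCategoryᵒᵖ} (c : X.X.obj m → π)
    (hc : ∀ x ∈ A.mem m, c x = 0) (x : X.X.obj m) :
    (cochainLift A c hc).hom (relChain x) = c x := by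
  simp [cochainLift, relChain]

lemma cochainLift_comp_relChain {m : SimplexCategoryᵒᵖ} (c : X.X.obj m → π)
    (hc : ∀ x ∈ A.mem m, c x = 0) : (fun x => (cochainLift A c hc).hom (relChain x)) = c :=
  funext (cochainLift_relChain A c hc)

open AlternatingFaceMapComplex in
lemma d_comp_apply_relChain {k : ℕ} {M : ModuleCat ℤ}
    (Ψ : (relSimplicialChains A).obj (op ⦋k⦌) ⟶ M) (x : X.X _⦋k + 1⦌) :
    (K[relSimplicialChains A].d (k + 1) k ≫ Ψ).hom (relChain x) =
      ∑ i : Fin (k + 2), ((-1 : ℤ) ^ (i : ℕ)) • Ψ.hom (relChain (X.X.δ i x)) := by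
  rw [obj_d_eq, Preadditive.sum_comp]
  simp only [ModuleCat.hom_sum, Preadditive.zsmul_comp, ModuleCat.hom_zsmul, ModuleCat.hom_comp]
  rw [LinearMap.sum_apply]
  exact Finset.sum_congr rfl fun i _ =>
    congrArg (((-1 : ℤ) ^ (i : ℕ)) • Ψ.hom ·) (relSimplicialChains_map_relChain A _ x)

lemma cob_comp_relChain {k : ℕ} (Ψ : (relSimplicialChains A).obj (op ⦋k⦌) ⟶ ModuleCat.of ℤ π) :
    cob X π k (fun x => Ψ.hom (relChain x)) =
      fun x => (K[relSimplicialChains A].d (k + 1) k ≫ Ψ).hom (relChain x) := by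
  funext x
  rw [d_comp_apply_relChain]
  rfl

lemma cob_eq_d_comp_cochainLift {k : ℕ} (c : X.X _⦋k⦌ → π) (hc : ∀ x ∈ A.mem _, c x = 0) :
    cob X π k c =
      fun x => (K[relSimplicialChains A].d (k + 1) k ≫ cochainLift A c hc).hom (relChain x) := by
  rw [← cob_comp_relChain, cochainLift_comp_relChain]

lemma degeneraciesVanish_iff_mem_normalizedCochains {n : ℕ}
    (Ψ : (relSimplicialChains A).obj (op ⦋n⦌) ⟶ ModuleCat.of ℤ π) :
    DegeneraciesVanish Ψ ↔ (fun x => Ψ.hom (relChain x)) ∈ normalizedCochains X π n := by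
  constructor
  · intro h Δ θ hθ x
    have hθP : (relSimplicialChains A).map θ.op ≫ (PInfty (X := relSimplicialChains A)).f n = 0 :=
      degeneracy_comp_PInfty _ n θ (by rwa [SimplexCategory.mono_iff_injective])
    calc Ψ.hom (relChain (X.X.map θ.op x))
        = Ψ.hom (((relSimplicialChains A).map θ.op).hom (relChain x)) :=
          congrArg Ψ.hom (relSimplicialChains_map_relChain A θ.op x).symm
      _ = ((relSimplicialChains A).map θ.op ≫ (PInfty (X := relSimplicialChains A)).f n ≫ Ψ).hom
            (relChain x) := by
          rw [PInfty_f_comp_of_degeneraciesVanish h]; rfl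
      _ = 0 := by rw [reassoc_of% hθP, Limits.zero_comp]; rfl
  · intro h
    cases n with
    | zero => trivial
    | succ k =>
      intro i
      exact relSimplicialChains.hom_ext fun y =>
        (congrArg Ψ.hom (relSimplicialChains_map_relChain A _ y)).trans (apply_σ_eq_zero h i y)

lemma relSimplicialChainsAct_app_comp_cochainLift [DistribMulAction G π] (g : G) {n : ℕ}
    {c : X.X _⦋n⦌ → π} (hc : c ∈ eqvCochains X π n) (hA : ∀ x ∈ A.mem _, c x = 0) :
    (relSimplicialChainsAct A g).app _ ≫ cochainLift A c hA =
      cochainLift A c hA ≫ ModuleCat.ofHom (DistribSMul.toLinearMap ℤ π g) :=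
  relSimplicialChains.hom_ext fun x => by
    simp only [ModuleCat.hom_comp, LinearMap.comp_apply, ModuleCat.hom_ofHom]
    rw [relSimplicialChainsAct_relChain, cochainLift_relChain, cochainLift_relChain, hc g x]
    rfl

end RelativeChains

section Normalization

variable {π : Type} [AddCommGroup π]

-- Absolute chains are the relative chains modulo the empty subcomplex `⊥`.
lemma cob_cob {k : ℕ} (c : X.X _⦋k⦌ → π) : cob X π (k + 1) (cob X π k c) = 0 := by
  rw [cob_eq_d_comp_cochainLift ⊥ c (fun _ h => h.elim), cob_comp_relChain,
    HomologicalComplex.d_comp_d_assoc, Limits.zero_comp]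
  rfl

lemma cob_mem_normalizedCochains {k : ℕ} {c : X.X _⦋k⦌ → π}
    (hc : c ∈ normalizedCochains X π k) : cob X π k c ∈ normalizedCochains X π (k + 1) := by
  have hΨ := (degeneraciesVanish_iff_mem_normalizedCochains ⊥
    (cochainLift ⊥ c fun _ h => h.elim)).2 (by rwa [cochainLift_comp_relChain])
  rw [cob_eq_d_comp_cochainLift ⊥ c (fun _ h => h.elim)]
  exact (degeneraciesVanish_iff_mem_normalizedCochains ⊥ _).1 hΨ.d_comp

variable [DistribMulAction G π] (A : GSub X)

lemma exists_normalized_cob_eq {n : ℕ} {u : X.X _⦋n + 1⦌ → π}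
    (hu : u ∈ normalizedCochains X π (n + 1)) {v : X.X _⦋n⦌ → π}
    (hv : v ∈ eqvRelCochain X A π n) (hvu : cob X π n v = u) :
    ∃ w ∈ eqvRelCochain X A π n, w ∈ normalizedCochains X π n ∧ cob X π n w = u := by
  set Ψ := cochainLift A v hv.2
  have hdΨ : DegeneraciesVanish (X := relSimplicialChains A) (n := n + 1)
      (K[relSimplicialChains A].d (n + 1) n ≫ Ψ) := by
    rw [degeneraciesVanish_iff_mem_normalizedCochains, ← cob_eq_d_comp_cochainLift, hvu]
    exact hu
  refine ⟨fun x => ((PInfty (X := relSimplicialChains A)).f n ≫ Ψ).hom (relChain x),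
    ⟨fun g x => ?_, fun x hx => ?_⟩, ?_, ?_⟩
  · calc ((PInfty (X := relSimplicialChains A)).f n ≫ Ψ).hom (relChain ((X.a g).app _ x))
        = ((relSimplicialChainsAct A g).app _ ≫ (PInfty (X := relSimplicialChains A)).f n ≫ Ψ).hom
            (relChain x) := by
          simp only [ModuleCat.hom_comp, LinearMap.comp_apply]
          rw [relSimplicialChainsAct_relChain]
      _ = ((PInfty (X := relSimplicialChains A)).f n ≫ Ψ ≫
            ModuleCat.ofHom (DistribSMul.toLinearMap ℤ π g)).hom (relChain x) := by
          rw [PInfty_f_naturality_assoc, relSimplicialChainsAct_app_comp_cochainLift A g hv.1]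
      _ = g • ((PInfty (X := relSimplicialChains A)).f n ≫ Ψ).hom (relChain x) := rfl
  · beta_reduce
    rw [relChain_eq_zero A hx, map_zero]
  · exact (degeneraciesVanish_iff_mem_normalizedCochains A _).1
      ((degeneraciesVanishPInfty_f (relSimplicialChains A) n).comp Ψ)
  · rw [cob_comp_relChain, ← Category.assoc, ← (PInfty (X := relSimplicialChains A)).comm,
      Category.assoc, PInfty_f_comp_of_degeneraciesVanish hdΨ, ← cob_eq_d_comp_cochainLift, hvu]

end Normalization

section EilenbergMacLaneMaps

variable {π : Type} [AddCommGroup π]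

def cochainOfMap {W : SSet} {q : ℕ} (f : W ⟶ CochSet π q) : W _⦋q⦌ → π :=
  fun x => f.app _ x (𝟙 _)

lemma app_apply_eq_cochainOfMap {W : SSet} {q : ℕ} (f : W ⟶ CochSet π q)
    {m : SimplexCategoryᵒᵖ} (x : W.obj m) (u : ⦋q⦌ ⟶ m.unop) :
    f.app m x u = cochainOfMap f (W.map u.op x) := by
  rw [cochainOfMap, NatTrans.naturality_apply f u.op x]
  exact congrArg (f.app m x) (Category.id_comp u).symm

lemma CochSet.hom_ext {W : SSet} {q : ℕ} {f f' : W ⟶ CochSet π q}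
    (h : cochainOfMap f = cochainOfMap f') : f = f' := by
  refine SSet.hom_ext fun m => ConcreteCategory.hom_ext _ _ fun x => funext fun u => ?_
  rw [app_apply_eq_cochainOfMap, app_apply_eq_cochainOfMap, h]

lemma GSub.hom_ext {B : GSub X} {W : SSet} {f f' : W ⟶ B.toSSet} (h : f ≫ B.ι = f' ≫ B.ι) :
    f = f' := by
  refine SSet.hom_ext fun m => ConcreteCategory.hom_ext _ _ fun x => Subtype.ext ?_
  exact ConcreteCategory.congr_hom (NatTrans.congr_app h m) x

lemma cochainOfMap_comp_cobS (X : GSSet G) {q : ℕ} (f : X.X ⟶ CochSet π q) :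
    cochainOfMap (f ≫ cobS π q) = cob X π q (cochainOfMap f) := by
  funext x
  change ∑ i : Fin (q + 2), ((-1 : ℤ) ^ (i : ℕ)) • f.app _ x (SimplexCategory.δ i ≫ 𝟙 _) =
    ∑ i : Fin (q + 2), ((-1 : ℤ) ^ (i : ℕ)) • cochainOfMap f (X.X.δ i x)
  refine Finset.sum_congr rfl fun i _ => ?_
  rw [Category.comp_id, app_apply_eq_cochainOfMap]
  rfl

lemma cochainOfMap_mem_normalizedCochains {q : ℕ} (f : X.X ⟶ CochSet π q)
    (hf : ∀ m x (u : ⦋q⦌ ⟶ m.unop), ¬Function.Injective u.toOrderHom → f.app m x u = 0) :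
    cochainOfMap f ∈ normalizedCochains X π q := fun _ θ hθ x => by
  rw [← app_apply_eq_cochainOfMap]
  exact hf _ x θ hθ

lemma GSub.isEqv_ι (B : GSub X) : IsEqv B.toGSSet X B.ι := fun _ => rfl

lemma IsEqv.comp {P Q : GSSet G} {f : X.X ⟶ P.X} {f' : P.X ⟶ Q.X} (hf : IsEqv X P f)
    (hf' : IsEqv P Q f') : IsEqv X Q (f ≫ f') := fun g => by
  rw [← Category.assoc, hf g, Category.assoc, hf' g, Category.assoc]

lemma cochainOfMap_mem_eqvCochains [DistribMulAction G π] {q : ℕ} {f : X.X ⟶ CochSet π q}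
    (hf : IsEqv X (CochGS G π q) f) : cochainOfMap f ∈ eqvCochains X π q := fun g x =>
  congr_fun (eqv_app hf g _ x) (𝟙 _)

end EilenbergMacLaneMaps

section ExtensionByZero

variable (A : GSub X) {π : Type} [AddCommGroup π]

lemma GSub.act_mem_iff (g : G) {m : SimplexCategoryᵒᵖ} (x : X.X.obj m) :
    (X.a g).app m x ∈ A.mem m ↔ x ∈ A.mem m := by
  refine ⟨fun h => ?_, A.act_mem g m x⟩
  have hinv : X.a g ≫ X.a g⁻¹ = 𝟙 X.X := by
    rw [← show X.a (g⁻¹ * g) = X.a g ≫ X.a g⁻¹ from X.act.map_mul g⁻¹ g, inv_mul_cancel]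
    exact X.act.map_one
  have hx := A.act_mem g⁻¹ m _ h
  rwa [← types_comp_apply ((X.a g).app m) ((X.a g⁻¹).app m), ← NatTrans.comp_app, hinv,
    NatTrans.id_app, types_id_apply] at hx

open Classical in
def extendByZero {q : ℕ} (c : A.toGSSet.X _⦋q⦌ → π) : X.X _⦋q⦌ → π :=
  fun x => if h : x ∈ A.mem _ then c ⟨x, h⟩ else 0

variable {A}

lemma extendByZero_of_mem {q : ℕ} (c : A.toGSSet.X _⦋q⦌ → π) {x : X.X _⦋q⦌}
    (hx : x ∈ A.mem _) : extendByZero A c x = c ⟨x, hx⟩ :=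
  dif_pos hx

lemma extendByZero_of_not_mem {q : ℕ} (c : A.toGSSet.X _⦋q⦌ → π) {x : X.X _⦋q⦌}
    (hx : x ∉ A.mem _) : extendByZero A c x = 0 :=
  dif_neg hx

lemma extendByZero_mem_normalizedCochains {q : ℕ} {c : A.toGSSet.X _⦋q⦌ → π}
    (hc : c ∈ normalizedCochains A.toGSSet π q) :
    extendByZero A c ∈ normalizedCochains X π q := by
  cases q with
  | zero => exact mem_normalizedCochains_zero _
  | succ k =>
    refine mem_normalizedCochains_of_σ fun i y => ?_
    by_cases h : X.X.σ i y ∈ A.mem _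
    · have hy : y ∈ A.mem _ := by
        have := A.map_mem (SimplexCategory.δ i.castSucc).op _ h
        rwa [← SimplicialObject.δ_def, ← types_comp_apply (X.X.σ i) (X.X.δ i.castSucc),
          SimplicialObject.δ_comp_σ_self, types_id_apply] at this
      rw [extendByZero_of_mem c h]
      exact apply_σ_eq_zero (X := A.toGSSet) hc i ⟨y, hy⟩
    · exact extendByZero_of_not_mem c h

lemma extendByZero_mem_eqvCochains [DistribMulAction G π] {q : ℕ} {c : A.toGSSet.X _⦋q⦌ → π}
    (hc : c ∈ eqvCochains A.toGSSet π q) : extendByZero A c ∈ eqvCochains X π q := by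
  intro g x
  by_cases h : x ∈ A.mem _
  · rw [extendByZero_of_mem c h, extendByZero_of_mem c (A.act_mem g _ x h)]
    exact hc g ⟨x, h⟩
  · rw [extendByZero_of_not_mem c h, extendByZero_of_not_mem c (mt (A.act_mem_iff g x).1 h),
      smul_zero]

lemma cob_extendByZero_of_mem {q : ℕ} (c : A.toGSSet.X _⦋q⦌ → π) {x : X.X _⦋q + 1⦌}
    (hx : x ∈ A.mem _) : cob X π q (extendByZero A c) x = cob A.toGSSet π q c ⟨x, hx⟩ := by
  simp only [cob, AddMonoidHom.mk'_apply]
  exact Finset.sum_congr rfl fun i _ =>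
    congrArg (((-1 : ℤ) ^ (i : ℕ)) • ·) (extendByZero_of_mem c (A.map_mem _ x hx))

lemma cob_extendByZero_cochainOfMap_of_mem {q : ℕ} {c : A.toGSSet.X ⟶ CochSet π q}
    {f : X.X ⟶ CochSet π (q + 1)} (h : c ≫ cobS π q = A.ι ≫ f) {x : X.X _⦋q + 1⦌}
    (hx : x ∈ A.mem _) : cob X π q (extendByZero A (cochainOfMap c)) x = cochainOfMap f x := by
  rw [cob_extendByZero_of_mem _ hx]
  refine (congrFun (cochainOfMap_comp_cobS A.toGSSet c) ⟨x, hx⟩).symm.trans ?_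
  rw [h]
  rfl

end ExtensionByZero

section Lifting

variable {π : Type} [AddCommGroup π] [DistribMulAction G π] {n : ℕ}

def mapOfCochain (L : X.X _⦋n⦌ → π) (hL : L ∈ normalizedCochains X π n) :
    X.X ⟶ (EG G π n).X where
  app m := ↾fun x => ⟨fun u => L (X.X.map u.op x), fun u hu => hL u hu x⟩
  naturality m m' f := by
    ext x : 3
    refine Subtype.ext (funext fun u => ?_)
    change L (X.X.map u.op (X.X.map f x)) = L (X.X.map (u ≫ f.unop).op x)
    rw [op_comp, Functor.map_comp_apply, Quiver.Hom.op_unop]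

lemma cochainOfMap_mapOfCochain_comp_ι (L : X.X _⦋n⦌ → π) (hL : L ∈ normalizedCochains X π n) :
    cochainOfMap (mapOfCochain L hL ≫ (ESub G π n).ι) = L := by
  funext x
  change L (X.X.map (𝟙 _).op x) = L x
  rw [op_id, Functor.map_id_apply]

lemma isEqv_mapOfCochain {L : X.X _⦋n⦌ → π} (hL : L ∈ normalizedCochains X π n)
    (hL' : L ∈ eqvCochains X π n) : IsEqv X (EG G π n) (mapOfCochain L hL) := fun g => by
  refine SSet.hom_ext fun m => ConcreteCategory.hom_ext _ _ fun x =>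
    Subtype.ext (funext fun u => ?_)
  change L (X.X.map u.op ((X.a g).app m x)) = g • L (X.X.map u.op x)
  rw [← NatTrans.naturality_apply (X.a g) u.op x]
  exact hL' g _

lemma exists_lift_of_cochain (A : GSub X) (c : A.toGSSet.X ⟶ (EG G π n).X)
    (z : X.X ⟶ (KG G π (n + 1)).X) {L : X.X _⦋n⦌ → π} (hL : L ∈ normalizedCochains X π n)
    (hL' : L ∈ eqvCochains X π n)
    (hLc : ∀ x (hx : x ∈ A.mem _), L x = cochainOfMap (c ≫ (ESub G π n).ι) ⟨x, hx⟩)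
    (hLz : cob X π n L = cochainOfMap (z ≫ kinc G π (n + 1))) :
    ∃ ℓ : X.X ⟶ (EG G π n).X, IsEqv X (EG G π n) ℓ ∧
      A.ι ≫ ℓ = c ∧ ℓ ≫ deltaE G π n = z ≫ kinc G π (n + 1) := by
  refine ⟨mapOfCochain L hL, isEqv_mapOfCochain hL hL', GSub.hom_ext (CochSet.hom_ext ?_),
    CochSet.hom_ext ?_⟩
  · exact funext fun x =>
      (congrFun (cochainOfMap_mapOfCochain_comp_ι L hL) x.1).trans (hLc x.1 x.2)
  · refine (cochainOfMap_comp_cobS X (mapOfCochain L hL ≫ (ESub G π n).ι)).trans ?_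
    rw [cochainOfMap_mapOfCochain_comp_ι, hLz]

lemma cob_cochainOfMap_kinc (z : X.X ⟶ (KG G π (n + 1)).X) :
    cob X π (n + 1) (cochainOfMap (z ≫ kinc G π (n + 1))) = 0 := by
  rw [← cochainOfMap_comp_cobS]
  exact funext fun x => (z.app _ x).2.2 (𝟙 _)

lemma exists_cob_eq_of_subsingleton_HG {A : GSub X} (hH : Subsingleton (HG X A π (n + 1)))
    {u : X.X _⦋n + 1⦌ → π} (hu : u ∈ relCocycles X A π (n + 1)) :
    ∃ v ∈ eqvRelCochain X A π n, cob X π n v = u := by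
  have h : (QuotientAddGroup.mk ⟨u, hu⟩ : HG X A π (n + 1)) = 0 := @Subsingleton.elim _ hH _ _
  rwa [QuotientAddGroup.eq_zero_iff, AddSubgroup.mem_addSubgroupOf] at h

end Lifting

end GSSet

open GSSet in
theorem lift_extend_eilenbergMacLane_general
    (G : Type) [Group G] (n : ℕ)
    (π : Type) [AddCommGroup π] [DistribMulAction G π]
    (X : GSSet G) (A : GSub X)
    (hH : Subsingleton (HG X A π (n + 1)))
    (c : A.toGSSet.X ⟶ (EG G π n).X) (hc : IsEqv A.toGSSet (EG G π n) c)
    (z : X.X ⟶ (KG G π (n + 1)).X) (hz : IsEqv X (KG G π (n + 1)) z)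
    (hsq : c ≫ deltaE G π n = A.ι ≫ z ≫ kinc G π (n + 1)) :
    ∃ ℓ : X.X ⟶ (EG G π n).X, IsEqv X (EG G π n) ℓ ∧
      A.ι ≫ ℓ = c ∧ ℓ ≫ deltaE G π n = z ≫ kinc G π (n + 1) := by
  set γ := extendByZero A (cochainOfMap (c ≫ (ESub G π n).ι))
  set ζ := cochainOfMap (z ≫ kinc G π (n + 1))
  have hγN : γ ∈ normalizedCochains X π n := extendByZero_mem_normalizedCochains
    (cochainOfMap_mem_normalizedCochains _ fun m x => (c.app m x).2)
  have hγE : γ ∈ eqvCochains X π n := extendByZero_mem_eqvCochains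
    (cochainOfMap_mem_eqvCochains (hc.comp (GSub.isEqv_ι (ESub G π n))))
  have hζN : ζ ∈ normalizedCochains X π (n + 1) :=
    cochainOfMap_mem_normalizedCochains _ fun m x => (z.app m x).2.1
  have hζE : ζ ∈ eqvCochains X π (n + 1) :=
    cochainOfMap_mem_eqvCochains (hz.comp (GSub.isEqv_ι (KSub G π (n + 1))))
  have hu : ζ - cob X π n γ ∈ relCocycles X A π (n + 1) :=
    ⟨⟨sub_mem hζE (cob_mem_eqvCochains hγE),
      fun x hx => sub_eq_zero.2 (cob_extendByZero_cochainOfMap_of_mem hsq hx).symm⟩,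
    AddMonoidHom.mem_ker.2 (by rw [map_sub, cob_cochainOfMap_kinc, cob_cob, sub_zero])⟩
  obtain ⟨v, hv, hvu⟩ := exists_cob_eq_of_subsingleton_HG hH hu
  obtain ⟨w, hw, hwN, hwu⟩ :=
    exists_normalized_cob_eq A (sub_mem hζN (cob_mem_normalizedCochains hγN)) hv hvu
  refine exists_lift_of_cochain A c z (add_mem hγN hwN) (add_mem hγE hw.1) (fun x hx => ?_) ?_
  · rw [Pi.add_apply, hw.2 x hx, add_zero]
    exact extendByZero_of_mem _ hx
  · rw [map_add, hwu, add_sub_cancel]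

open GSSet in
/-- Let `π` be a `ℤG`-module and `(X,A)` a pair of free `G`-simplicial
sets.  If `H^{n+1}_G(X,A;π) = 0`, then for all equivariant simplicial maps `c : A → E(π,n)`
and `z : X → K(π,n+1)` with `δ ∘ c = z|_A`, there is an equivariant simplicial map
`ℓ : X → E(π,n)` with `ℓ|_A = c` and `δ ∘ ℓ = z`. -/
theorem lift_extend_eilenbergMacLane
    (G : Type) [Group G] [Finite G] (n : ℕ)
    (π : Type) [AddCommGroup π] [DistribMulAction G π]
    (X : GSSet G) (hX : X.Free) (A : GSub X)
    (hH : Subsingleton (HG X A π (n + 1)))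
    (c : A.toGSSet.X ⟶ (EG G π n).X) (hc : IsEqv A.toGSSet (EG G π n) c)
    (z : X.X ⟶ (KG G π (n + 1)).X) (hz : IsEqv X (KG G π (n + 1)) z)
    (hsq : c ≫ deltaE G π n = A.ι ≫ z ≫ kinc G π (n + 1)) :
    ∃ ℓ : X.X ⟶ (EG G π n).X, IsEqv X (EG G π n) ℓ ∧
      A.ι ≫ ℓ = c ∧ ℓ ≫ deltaE G π n = z ≫ kinc G π (n + 1) :=
  lift_extend_eilenbergMacLane_general G n π X A hH c hc z hz hsq
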